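/- arXiv:0912.2387 — 6 statements merged into one kernel-verified Lean document; each statement's English description precedes it below -/
import Mathlib

section
/- Let M be a real symmetric n×n matrix whose diagonal entries are all 0 and whose off-diagonal entries are 0, 1, or -1. If e is an eigenvalue of M with multiplicity at least m (with 1 ≤ m ≤ n), then e² ≤ (n-1)(n-m)/m. -/
open Module

set_option maxHeartbeats 1600000 in
theorem eigenvalue_multiplicity_bound
    (n m : ℕ) (M : Matrix (Fin n) (Fin n) ℝ)
    (hsymm : M.IsSymm)
    (hdiag : ∀ i, M i i = 0)
    (hoff : ∀ i j, i ≠ j → M i j = 0 ∨ M i j = 1 ∨ M i j = -1)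
    (e : ℝ) (hm1 : 1 ≤ m) (hmn : m ≤ n)
    (hmult : m ≤ Module.finrank ℝ (Module.End.eigenspace (Matrix.toLin' M) e)) :
    e ^ 2 ≤ ((n : ℝ) - 1) * ((n : ℝ) - (m : ℝ)) / (m : ℝ) := by
  classical
  open Matrix in
  have hM : M.IsHermitian := by
    rw [Matrix.IsHermitian, conjTranspose_eq_transpose_of_trivial]; exact hsymm
  open Matrix in
  set D := hM.eigenvalues with hD
  open Matrix in
  set U : Matrix (Fin n) (Fin n) ℝ := (hM.eigenvectorUnitary : Matrix (Fin n) (Fin n) ℝ) with hU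
  have hUU : star U * U = 1 := Matrix.mem_unitaryGroup_iff'.mp hM.eigenvectorUnitary.2
  have hUU' : U * star U = 1 := Matrix.mem_unitaryGroup_iff.mp hM.eigenvectorUnitary.2
  open Matrix in
  have hspec : M = U * diagonal D * star U := by
    simpa using hM.spectral_theorem
  open Matrix in
  -- trace facts
  have htr : ∑ i, D i = 0 := by
    have h1 : M.trace = 0 := by
      simp [Matrix.trace, Matrix.diag, hdiag]
    have h2 : M.trace = ∑ i, D i := by
      rw [hspec, Matrix.trace_mul_cycle, hUU, one_mul, Matrix.trace_diagonal]
    linarith [h1, h2]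
  open Matrix in
  have htr2 : ∑ i, (D i)^2 ≤ (n : ℝ) * ((n : ℝ) - 1) := by
    have h2 : (M * M).trace = ∑ i, (D i)^2 := by
      rw [hspec]
      rw [show (U * diagonal D * star U) * (U * diagonal D * star U)
          = U * (diagonal D * (star U * U) * diagonal D) * star U by noncomm_ring]
      rw [hUU, mul_one, diagonal_mul_diagonal, Matrix.trace_mul_cycle, hUU, one_mul,
        Matrix.trace_diagonal]
      exact Finset.sum_congr rfl fun i _ => (sq (D i)).symm
    have h1 : (M * M).trace ≤ (n : ℝ) * ((n : ℝ) - 1) := by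
      have key : ∀ i j : Fin n, M i j * M j i ≤ if i = j then 0 else 1 := by
        intro i j
        by_cases h : i = j
        · simp [h, hdiag]
        · have hji : M j i = M i j := hsymm.apply i j
          rw [hji, if_neg h]
          rcases hoff i j h with h' | h' | h' <;> rw [h'] <;> norm_num
      have hb1 : (M * M).trace ≤ ∑ i : Fin n, ∑ j : Fin n, (if i = j then (0:ℝ) else 1) := by
        rw [Matrix.trace]
        apply Finset.sum_le_sum
        intro i _
        rw [Matrix.diag_apply, Matrix.mul_apply]
        exact Finset.sum_le_sum fun j _ => key i j
      refine hb1.trans ?_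
      have hb2 : ∀ i : Fin n, ∑ j : Fin n, (if i = j then (0:ℝ) else 1) = (n : ℝ) - 1 := by
        intro i
        have : ∑ j : Fin n, (if i = j then (0:ℝ) else 1)
            = ∑ j : Fin n, ((1:ℝ) - if i = j then 1 else 0) := by
          apply Finset.sum_congr rfl; intro j _; by_cases h : i = j <;> simp [h]
        rw [this, Finset.sum_sub_distrib, Finset.sum_ite_eq]
        simp
      rw [Finset.sum_congr rfl fun i _ => hb2 i, Finset.sum_const]
      simp [mul_comm]
    linarith [h1, h2]
  open Matrix in
  -- multiplicity: the eigenspace dimension is the number of eigenvalues equal to e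
  set S : Finset (Fin n) := Finset.univ.filter (fun i => D i = e) with hS
  have hcard : m ≤ S.card := by
    have hker : Module.End.eigenspace (Matrix.toLin' M) e
        = LinearMap.ker (Matrix.mulVecLin (M - e • 1)) := by
      ext x
      rw [Module.End.mem_eigenspace_iff, LinearMap.mem_ker, Matrix.mulVecLin_apply,
        Matrix.sub_mulVec, Matrix.smul_mulVec, Matrix.one_mulVec, sub_eq_zero]
      rfl
    have hdecomp : M - e • 1 = U * diagonal (fun i => D i - e) * star U := by
      have h1 : (diagonal (fun i => D i - e) : Matrix (Fin n) (Fin n) ℝ)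
          = diagonal D - e • 1 := by
        rw [smul_one_eq_diagonal, diagonal_sub]
      rw [h1, Matrix.mul_sub, Matrix.sub_mul, ← hspec]
      congr 1
      rw [Matrix.mul_smul, Matrix.mul_one, Matrix.smul_mul, hUU']
    have hdetU : IsUnit U.det := by
      apply IsUnit.of_mul_eq_one (a := U.det) (star U).det
      rw [← Matrix.det_mul, hUU', Matrix.det_one]
    have hdetU' : IsUnit (star U).det := by
      apply IsUnit.of_mul_eq_one (a := (star U).det) U.det
      rw [← Matrix.det_mul, hUU, Matrix.det_one]
    have hrank : (M - e • 1).rank = Fintype.card {i // D i - e ≠ 0} := by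
      rw [hdecomp, Matrix.rank_mul_eq_left_of_isUnit_det _ _ hdetU',
        Matrix.rank_mul_eq_right_of_isUnit_det _ _ hdetU, Matrix.rank_diagonal]
    have hrn : (M - e • 1).rank
        + finrank ℝ (LinearMap.ker (Matrix.mulVecLin (M - e • 1))) = n := by
      have := LinearMap.finrank_range_add_finrank_ker (Matrix.mulVecLin (M - e • 1))
      rw [Matrix.rank]
      rwa [Module.finrank_pi, Fintype.card_fin] at this
    have hcardsplit : Fintype.card {i // D i - e ≠ 0} + S.card = n := by
      rw [Fintype.card_subtype]
      have := Finset.card_filter_add_card_filter_not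
        (s := (Finset.univ : Finset (Fin n))) (p := fun i => D i = e)
      have h2 : (Finset.univ.filter (fun i => D i - e ≠ 0))
          = (Finset.univ.filter (fun i => ¬ D i = e)) := by
        apply Finset.filter_congr; intro i _; simp [sub_eq_zero]
      rw [Finset.card_univ, Fintype.card_fin] at this
      rw [h2, hS]
      omega
    rw [hker] at hmult
    omega
  -- every index in S gives eigenvalue e
  have hSe : ∀ i ∈ S, D i = e := by
    intro i hi
    exact (Finset.mem_filter.mp hi).2
  clear_value D
  clear_value U
  clear hS hD hmult hspec hUU hUU' hU U hM hoff hdiag hsymm M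
  -- final algebra
  set k := S.card with hk
  have hkn : k ≤ n := by
    simpa using Finset.card_le_univ S
  have hsumS : ∑ i ∈ S, D i = (k : ℝ) * e := by
    rw [Finset.sum_congr rfl hSe, Finset.sum_const, nsmul_eq_mul]
  have hsumS2 : ∑ i ∈ S, (D i)^2 = (k : ℝ) * e^2 := by
    rw [Finset.sum_congr rfl (fun i hi => by rw [hSe i hi]), Finset.sum_const, nsmul_eq_mul]
  have hsplit : ∑ i ∈ S, D i + ∑ i ∈ Sᶜ, D i = 0 := by
    rw [Finset.sum_add_sum_compl]; exact htr
  have hsplit2 : ∑ i ∈ S, (D i)^2 + ∑ i ∈ Sᶜ, (D i)^2 ≤ (n : ℝ) * ((n : ℝ) - 1) := by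
    rw [Finset.sum_add_sum_compl]; exact htr2
  have hcs : (∑ i ∈ Sᶜ, D i)^2 ≤ ((n : ℝ) - k) * ∑ i ∈ Sᶜ, (D i)^2 := by
    have := Finset.sum_mul_sq_le_sq_mul_sq Sᶜ (fun _ => (1:ℝ)) D
    simp only [one_pow, one_mul, Finset.sum_const, nsmul_eq_mul, mul_one] at this
    have hccard : (Sᶜ.card : ℝ) = (n : ℝ) - k := by
      rw [Finset.card_compl, Fintype.card_fin, ← hk]
      push_cast [Nat.cast_sub hkn]
      ring
    rwa [hccard] at this
  have hmr : (1:ℝ) ≤ (m:ℝ) := by exact_mod_cast hm1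
  have hmk : (m:ℝ) ≤ (k:ℝ) := by exact_mod_cast hcard
  have hknr : (k:ℝ) ≤ (n:ℝ) := by exact_mod_cast hkn
  have hkpos : (0:ℝ) < k := by linarith
  have hnpos : (0:ℝ) < n := by linarith
  have hcsum : ∑ i ∈ Sᶜ, D i = -((k:ℝ) * e) := by linarith [hsplit, hsumS]
  have hT2 : (k:ℝ) * e^2 + ∑ i ∈ Sᶜ, (D i)^2 ≤ (n:ℝ) * ((n:ℝ) - 1) := by
    linarith [hsplit2, hsumS2]
  have h5 : (k:ℝ)^2 * e^2 ≤ ((n:ℝ) - k) * ∑ i ∈ Sᶜ, (D i)^2 := by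
    have := hcs
    rw [hcsum] at this
    nlinarith [this]
  have h6 : ((n:ℝ) - k) * ∑ i ∈ Sᶜ, (D i)^2
      ≤ ((n:ℝ) - k) * ((n:ℝ) * ((n:ℝ) - 1) - (k:ℝ) * e^2) :=
    mul_le_mul_of_nonneg_left (by linarith [hT2]) (by linarith)
  have hkey : (n:ℝ) * ((k:ℝ) * e^2) ≤ (n:ℝ) * (((n:ℝ) - k) * ((n:ℝ) - 1)) := by
    nlinarith [h5, h6]
  have hkey2 : (k:ℝ) * e^2 ≤ ((n:ℝ) - k) * ((n:ℝ) - 1) :=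
    le_of_mul_le_mul_left hkey hnpos
  rw [le_div_iff₀ (by linarith : (0:ℝ) < (m:ℝ))]
  have hmono : (m:ℝ) * ((n:ℝ) - k) ≤ (k:ℝ) * ((n:ℝ) - m) := by nlinarith
  have hfin : (k:ℝ) * (e^2 * (m:ℝ)) ≤ (k:ℝ) * (((n:ℝ) - 1) * ((n:ℝ) - m)) := by
    nlinarith [sq_nonneg e]
  have := le_of_mul_le_mul_left hfin hkpos
  linarith
end

section
/- Let M be a real symmetric matrix of the form M = k·I + A, where k is a real number and A is a symmetric matrix with zero diagonal and integer off-diagonal entries. If the multiplicity of the eigenvalue 0 of M is strictly greater than the maximum multiplicity of any nonzero eigenvalue of M, then k is an integer. -/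
/-!
A real eigenvalue of a real symmetric matrix has geometric multiplicity equal to its
multiplicity as a root of the characteristic polynomial, and for `A` with integer entries
that polynomial has rational (indeed integer, monic) coefficients. Every root of the minimal
polynomial of `-k` over `ℚ` is a real eigenvalue of `A` with the same multiplicity as `-k`, so
the strict maximality of the multiplicity of `-k` forces that minimal polynomial to be linear:
`-k` is rational. Being also an algebraic integer, it is an integer.
-/

open Polynomial

theorem Module.End.eigenspace_smul_one_add {R M : Type*} [CommRing R] [AddCommGroup M] [Module R M]
    (f : Module.End R M) (c μ : R) : (c • 1 + f).eigenspace μ = f.eigenspace (μ - c) := by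
  rw [eigenspace_def, eigenspace_def, sub_smul]
  congr 1
  abel

theorem Polynomial.isRoot_of_forall_rootMultiplicity_lt {R : Type*} [CommRing R] [IsDomain R]
    {p : R[X]} (hp : p ≠ 0) {x : R} (hmax : ∀ y ≠ x, p.rootMultiplicity y < p.rootMultiplicity x) :
    p.IsRoot x :=
  (rootMultiplicity_pos hp).mp (Nat.zero_lt_of_lt (hmax (x + 1) (by simp)))

section Conjugates

variable {K L : Type*} [Field K] [PerfectField K] [Field L] [Algebra K L]

theorem Polynomial.rootMultiplicity_map_eq_of_minpoly_eq {p : K[X]} (hp : p ≠ 0) {x y : L}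
    (hx : IsIntegral K x) (hxy : minpoly K y = minpoly K x) :
    (p.map (algebraMap K L)).rootMultiplicity y = (p.map (algebraMap K L)).rootMultiplicity x := by
  classical
  obtain ⟨m, r, hqr, rfl⟩ := WfDvdMonoid.max_power_factor hp (minpoly.irreducible hx)
  set q := minpoly K x
  have hq_sep : (q.map (algebraMap K L)).Separable :=
    (PerfectField.separable_of_irreducible (minpoly.irreducible hx)).map
  have hq_ne : q.map (algebraMap K L) ≠ 0 := map_monic_ne_zero (minpoly.monic hx)
  suffices ∀ z : L, minpoly K z = q → ((q ^ m * r).map (algebraMap K L)).rootMultiplicity z = m by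
    rw [this y hxy, this x rfl]
  intro z hz
  have hq_root : (q.map (algebraMap K L)).rootMultiplicity z = 1 := by
    refine le_antisymm (rootMultiplicity_le_one_of_separable hq_sep z) ?_
    refine (rootMultiplicity_pos hq_ne).mpr ?_
    rw [IsRoot, eval_map, ← aeval_def, ← hz]
    exact minpoly.aeval K z
  have hr_root : (r.map (algebraMap K L)).rootMultiplicity z = 0 := by
    refine rootMultiplicity_eq_zero fun h ↦ hqr ?_
    rw [← hz]
    exact minpoly.dvd K z (by rwa [aeval_def, eval₂_eq_eval_map])
  rw [Polynomial.map_mul, Polynomial.map_pow, rootMultiplicity_mul (by simpa using hp),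
    ← count_roots, roots_pow, Multiset.count_nsmul, count_roots, hq_root, hr_root, mul_one,
    add_zero]

theorem mem_range_algebraMap_of_unique_root_minpoly {x : L} (hx : IsIntegral K x)
    (hs : ((minpoly K x).map (algebraMap K L)).Splits)
    (huniq : ∀ y : L, aeval y (minpoly K x) = 0 → y = x) : x ∈ (algebraMap K L).range := by
  classical
  rw [← minpoly.natDegree_eq_one_iff]
  set q := (minpoly K x).map (algebraMap K L)
  have hroots : q.roots = Multiset.replicate q.roots.card x :=
    Multiset.eq_replicate_card.mpr fun y hy ↦
      huniq y (by rw [aeval_def, eval₂_eq_eval_map]; exact (mem_roots'.mp hy).2)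
  have hcard : q.roots.card ≤ 1 := by
    have := count_roots_le_one (p := q)
      (PerfectField.separable_of_irreducible (minpoly.irreducible hx)).map x
    rwa [hroots, Multiset.count_replicate_self] at this
  have := splits_iff_card_roots.mp hs
  rw [natDegree_map] at this
  have := minpoly.natDegree_pos hx
  omega

theorem mem_range_algebraMap_of_rootMultiplicity_lt {p : K[X]} (hp : p ≠ 0)
    (hs : (p.map (algebraMap K L)).Splits) {x : L}
    (hmax : ∀ y ≠ x, (p.map (algebraMap K L)).rootMultiplicity y <
      (p.map (algebraMap K L)).rootMultiplicity x) :
    x ∈ (algebraMap K L).range := by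
  have hroot : aeval x p = 0 := by
    have := isRoot_of_forall_rootMultiplicity_lt (Polynomial.map_ne_zero hp) hmax
    rwa [IsRoot, eval_map, ← aeval_def] at this
  have hx : IsIntegral K x := IsAlgebraic.isIntegral ⟨p, hp, hroot⟩
  have hs' : ((minpoly K x).map (algebraMap K L)).Splits :=
    hs.of_dvd (Polynomial.map_ne_zero hp) (Polynomial.map_dvd _ (minpoly.dvd K x hroot))
  refine mem_range_algebraMap_of_unique_root_minpoly hx hs' fun y hy ↦ ?_
  by_contra hne
  have hconj := minpoly.eq_of_irreducible_of_monic (minpoly.irreducible hx) hy (minpoly.monic hx)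
  exact (hmax y hne).ne (rootMultiplicity_map_eq_of_minpoly_eq hp hx hconj.symm)

end Conjugates

theorem mem_range_algebraMap_of_isIntegral {R K L : Type*} [CommRing R] [IsDomain R]
    [IsIntegrallyClosed R] [Field K] [Algebra R K] [IsFractionRing R K] [Field L] [Algebra R L]
    [Algebra K L] [IsScalarTower R K L] {x : L} (hK : x ∈ (algebraMap K L).range)
    (hR : IsIntegral R x) : x ∈ (algebraMap R L).range := by
  obtain ⟨q, rfl⟩ := hK
  have hq : IsIntegral R q :=
    (isIntegral_algHom_iff (IsScalarTower.toAlgHom R K L) (algebraMap K L).injective).mp hR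
  obtain ⟨r, rfl⟩ := IsIntegrallyClosed.isIntegral_iff.mp hq
  exact ⟨r, IsScalarTower.algebraMap_apply R K L r⟩

namespace Matrix

theorem exists_map_eq_of_forall_mem_range {m n α β : Type*} (f : α → β) (B : Matrix m n β)
    (h : ∀ i j, B i j ∈ Set.range f) : ∃ A : Matrix m n α, A.map f = B := by
  choose A hA using h
  exact ⟨A, ext hA⟩

variable {n : Type*} [Fintype n] [DecidableEq n]

theorem isIntegral_of_isRoot_charpoly_map {R S : Type*} [CommRing R] [CommRing S] [Algebra R S]
    (A : Matrix n n R) {x : S} (hx : (A.map (algebraMap R S)).charpoly.IsRoot x) :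
    IsIntegral R x :=
  ⟨A.charpoly, A.charpoly_monic, by rwa [charpoly_map, IsRoot, eval_map] at hx⟩

variable {𝕜 : Type*} [RCLike 𝕜] {B : Matrix n n 𝕜}

theorem IsHermitian.isSemisimple_toLin' (hB : B.IsHermitian) :
    Module.End.IsSemisimple (toLin' B) := by
  refine ((WithLp.linearEquiv 2 𝕜 (n → 𝕜)).symm.isSemisimple_iff _ (toEuclideanLin B) rfl).mpr ?_
  exact Module.End.isFinitelySemisimple_iff_isSemisimple.mp
    (isSymmetric_toEuclideanLin_iff.mpr hB).isFinitelySemisimple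

theorem IsHermitian.finrank_eigenspace_toLin' (hB : B.IsHermitian) (μ : 𝕜) :
    Module.finrank 𝕜 (Module.End.eigenspace (toLin' B) μ) = B.charpoly.rootMultiplicity μ := by
  rw [← hB.isSemisimple_toLin'.isFinitelySemisimple.maxGenEigenspace_eq_eigenspace,
    LinearMap.finrank_maxGenEigenspace_eq, charpoly_toLin']

end Matrix

theorem diagonal_entry_is_integer
    (n : ℕ) (k : ℝ) (A : Matrix (Fin n) (Fin n) ℝ)
    (hAsymm : A.IsSymm)
    (hAdiag : ∀ i, A i i = 0)
    (hAint : ∀ i j, i ≠ j → ∃ z : ℤ, A i j = (z : ℝ))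
    (M : Matrix (Fin n) (Fin n) ℝ)
    (hM : M = k • (1 : Matrix (Fin n) (Fin n) ℝ) + A)
    (hmult : ∀ e : ℝ, e ≠ 0 →
      Module.finrank ℝ (Module.End.eigenspace (Matrix.toLin' M) e) <
      Module.finrank ℝ (Module.End.eigenspace (Matrix.toLin' M) 0)) :
    ∃ z : ℤ, k = (z : ℝ) := by
  have hA : A.IsHermitian := Matrix.isHermitian_iff_isSymm.mpr hAsymm
  obtain ⟨A₀, hA₀⟩ := A.exists_map_eq_of_forall_mem_range (algebraMap ℤ ℝ) fun i j ↦ by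
    by_cases hij : i = j
    · exact ⟨0, by simp [hij, hAdiag]⟩
    · obtain ⟨z, hz⟩ := hAint i j hij
      exact ⟨z, by simp [hz]⟩
  set p : ℚ[X] := A₀.charpoly.map (algebraMap ℤ ℚ)
  have hp : p.map (algebraMap ℚ ℝ) = A.charpoly := by
    rw [Polynomial.map_map, ← IsScalarTower.algebraMap_eq, ← Matrix.charpoly_map, hA₀]
  have hmax : ∀ y ≠ -k, A.charpoly.rootMultiplicity y < A.charpoly.rootMultiplicity (-k) := by
    intro y hy
    have := hmult (y + k) (by contrapose! hy; linarith)
    rwa [hM, map_add, map_smul, Matrix.toLin'_one, ← Module.End.one_eq_id,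
      Module.End.eigenspace_smul_one_add, Module.End.eigenspace_smul_one_add,
      hA.finrank_eigenspace_toLin',
      hA.finrank_eigenspace_toLin', add_sub_cancel_right, zero_sub] at this
  have hrat : -k ∈ (algebraMap ℚ ℝ).range :=
    mem_range_algebraMap_of_rootMultiplicity_lt (A₀.charpoly_monic.map _).ne_zero
      (hp ▸ hA.splits_charpoly) (hp ▸ hmax)
  have hint : IsIntegral ℤ (-k) := A₀.isIntegral_of_isRoot_charpoly_map
    (hA₀ ▸ isRoot_of_forall_rootMultiplicity_lt A.charpoly_monic.ne_zero hmax)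
  obtain ⟨z, hz⟩ := mem_range_algebraMap_of_isIntegral hrat hint
  exact ⟨-z, by rw [Int.cast_neg, ← eq_intCast (algebraMap ℤ ℝ), hz, neg_neg]⟩
end

section
/- Let X be a finite subset of ℝ^d and let N be a positive integer. Suppose for each x ∈ X there is a function F_x : X → ℝ such that: F_x(x) = k for a fixed real constant k, F_x(y) ∈ {0,1} for all y ∈ X with y ≠ x, F_x(y) = F_y(x) for all x, y ∈ X, and the matrix M = (F_x(y))_{x,y∈X} has rank at most N. If |X| ≥ 2N, then k is an integer. -/
/-!
Write `M = A + k • 1`, where `A` is the adjacency matrix of the graph `G` on `X` with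
`x ~ y ↔ F x y = 1`. As `M` is singular, `-k` is an eigenvalue of the integer matrix `A`, so `k`
is an algebraic integer, hence an integer if it is rational. Otherwise the minimal polynomial of
`k` has two distinct complex roots `β₁, β₂`, and the Galois conjugates `A + βᵢ • 1` of `M` still
have rank at most `N ≤ |X| / 2`. Their difference is invertible, so their ranges span the whole
space and hence meet trivially, which forces `(A + β₁ • 1) * (A + β₂ • 1) = 0`. Read entrywise,
this says that `G` is regular, of degree `d` say, and that two distinct vertices with a common
neighbour are adjacent: `G` is a disjoint union of `(d + 1)`-cliques. Then
`A² = (d - 1) • A + d • 1`, so the eigenvalue `-k` of `A` is `-1` or `d`, and `k` is an integer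
after all.
-/

open Polynomial IntermediateField Matrix

namespace Matrix

variable {m K L : Type*} [Fintype m] [DecidableEq m] [Field K] [Field L]

theorem rank_mul_mul_of_isUnit {V U : Matrix m m K} (A : Matrix m m K) (hV : IsUnit V)
    (hU : IsUnit U) : (V * A * U).rank = A.rank := by
  rw [rank_mul_eq_left_of_isUnit_det _ _ ((isUnit_iff_isUnit_det _).mp hU),
    rank_mul_eq_right_of_isUnit_det _ _ ((isUnit_iff_isUnit_det _).mp hV)]

theorem rank_map_ringHom (f : K →+* L) (M : Matrix m m K) : (M.map f).rank = M.rank := by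
  obtain ⟨V, U, e, hV, hU, hVMU⟩ := exists_rank_normal_form M
  obtain ⟨w, hw⟩ : ∃ w, V * M * U = diagonal w := ⟨_, by
    rw [hVMU, ← diagonal_one, ← diagonal_zero, fromBlocks_diagonal, submatrix_diagonal_equiv]⟩
  classical
  calc (M.map f).rank = (V.map f * M.map f * U.map f).rank :=
        (rank_mul_mul_of_isUnit _ (hV.map f.mapMatrix) (hU.map f.mapMatrix)).symm
    _ = (diagonal (f ∘ w)).rank := by
        rw [← Matrix.map_mul, ← Matrix.map_mul, hw, diagonal_map f.map_zero]; rfl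
    _ = (diagonal w).rank := by simp only [rank_diagonal, Function.comp_apply, _root_.map_ne_zero]
    _ = M.rank := by rw [← hw, rank_mul_mul_of_isUnit _ hV hU]

theorem mul_sub_smul_one_eq_zero_of_rank_add_rank_le {E : Matrix m m K} {c : K} (hc : c ≠ 0)
    (hrank : E.rank + (E - c • 1).rank ≤ Fintype.card m) : E * (E - c • 1) = 0 := by
  set R₁ := LinearMap.range E.mulVecLin
  set R₂ := LinearMap.range (E - c • 1).mulVecLin
  have hsup : R₁ ⊔ R₂ = ⊤ := by
    refine eq_top_iff.mpr fun v _ => Submodule.mem_sup.mpr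
      ⟨E *ᵥ (c⁻¹ • v), ⟨_, rfl⟩, -((E - c • 1) *ᵥ (c⁻¹ • v)), neg_mem ⟨_, rfl⟩, ?_⟩
    rw [← sub_eq_add_neg, ← sub_mulVec, sub_sub_cancel, smul_mulVec, one_mulVec, smul_smul,
      mul_inv_cancel₀ hc, one_smul]
  have hinf : R₁ ⊓ R₂ = ⊥ := by
    have hdim := Submodule.finrank_sup_add_finrank_inf_eq R₁ R₂
    rw [hsup, finrank_top, Module.finrank_fintype_fun_eq_card] at hdim
    change Module.finrank K R₁ + Module.finrank K R₂ ≤ _ at hrank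
    exact Submodule.finrank_eq_zero.mp (by omega)
  have hcomm : E * (E - c • 1) = (E - c • 1) * E := by
    simp only [mul_sub, sub_mul, Matrix.mul_smul, Matrix.smul_mul, mul_one, one_mul]
  refine (toLin' (R := K)).injective (LinearMap.ext fun v => ?_)
  have hmem : (E * (E - c • 1)) *ᵥ v ∈ R₁ ⊓ R₂ :=
    ⟨⟨_, mulVec_mulVec _ _ _⟩, ⟨E *ᵥ v, (mulVec_mulVec _ _ _).trans (by rw [hcomm])⟩⟩
  rw [hinf] at hmem
  rw [toLin'_apply, toLin'_apply, zero_mulVec]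
  exact (Submodule.mem_bot K).mp hmem

theorem isIntegral_of_det_map_add_smul_one_eq_zero {R S : Type*} [CommRing R] [CommRing S]
    [Algebra R S] (A : Matrix m m R) {s : S}
    (h : (A.map (algebraMap R S) + s • 1).det = 0) : IsIntegral R s := by
  refine ⟨(-A).charpoly, (-A).charpoly_monic, ?_⟩
  rw [eval₂_eq_eval_map, ← charpoly_map, eval_charpoly, ← h,
    Matrix.map_neg _ (map_neg (algebraMap R S)), scalar_apply,
    smul_one_eq_diagonal, sub_neg_eq_add, add_comm]

end Matrix

theorem exists_int_eq_of_isIntegral_of_mem_range {K : Type*} [Field K] [CharZero K] {x : K}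
    (hx : IsIntegral ℤ x) (hq : x ∈ (algebraMap ℚ K).range) : ∃ z : ℤ, x = z := by
  obtain ⟨q, rfl⟩ := hq
  obtain ⟨z, hz⟩ := IsIntegrallyClosed.isIntegral_iff.mp
    ((isIntegral_algebraMap_iff (algebraMap ℚ K).injective).mp hx)
  exact ⟨z, by rw [← hz]; simp⟩

section Conjugates

variable {F E L : Type*} [Field F] [Field E] [Field L] [Algebra F E] [Algebra F L]

theorem exists_ne_mem_aroots_minpoly [CharZero F] [IsAlgClosed L] {α : E} (hα : IsIntegral F α)
    (hαF : α ∉ (algebraMap F E).range) :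
    ∃ β₁ ∈ (minpoly F α).aroots L, ∃ β₂ ∈ (minpoly F α).aroots L, β₁ ≠ β₂ := by
  classical
  have hcard : ((minpoly F α).aroots L).toFinset.card = (minpoly F α).natDegree := by
    rw [Multiset.toFinset_card_of_nodup (nodup_roots (minpoly.irreducible hα).separable.map),
      ← (IsAlgClosed.splits _).natDegree_eq_card_roots, natDegree_map]
  obtain ⟨β₁, hβ₁, β₂, hβ₂, hne⟩ :=
    Finset.one_lt_card.mp (hcard ▸ (minpoly.two_le_natDegree_iff hα).mpr hαF)
  exact ⟨β₁, Multiset.mem_toFinset.mp hβ₁, β₂, Multiset.mem_toFinset.mp hβ₂, hne⟩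

theorem Matrix.rank_map_add_smul_one_eq_of_mem_aroots {n : Type*} [Fintype n] [DecidableEq n]
    (A : Matrix n n F) {α : E} (hα : IsIntegral F α) {β : L}
    (hβ : β ∈ (minpoly F α).aroots L) :
    (A.map (algebraMap F L) + β • 1).rank = (A.map (algebraMap F E) + α • 1).rank := by
  let σ : F⟮α⟯ →ₐ[F] L := (algHomAdjoinIntegralEquiv F hα).symm ⟨β, hβ⟩
  let B := A.map (algebraMap F F⟮α⟯) + AdjoinSimple.gen F α • 1
  have hσ : B.map (σ : F⟮α⟯ →+* L) = A.map (algebraMap F L) + β • 1 := by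
    ext i j
    by_cases hij : i = j <;> simp [B, σ, hij, algHomAdjoinIntegralEquiv_symm_apply_gen]
  have hι : B.map (algebraMap F⟮α⟯ E) = A.map (algebraMap F E) + α • 1 := by
    ext i j
    by_cases hij : i = j <;> simp [B, hij]
  rw [← hσ, ← hι, rank_map_ringHom, rank_map_ringHom]

end Conjugates

namespace SimpleGraph

open Finset

variable {V : Type*} (G : SimpleGraph V) [DecidableRel G.Adj]

theorem map_adjMatrix {R S : Type*} [NonAssocSemiring R] [NonAssocSemiring S] (f : R →+* S) :
    (G.adjMatrix R).map f = G.adjMatrix S := by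
  ext v w
  by_cases h : G.Adj v w <;> simp [h]

theorem adjMatrix_fromRel_add_smul_one [DecidableEq V] {R : Type*} [Ring R] [Nontrivial R]
    {F : V → V → R} {k : R} [DecidableRel (fromRel fun x y => F x y = 1).Adj]
    (hdiag : ∀ x, F x x = k)
    (hoff : ∀ x y, x ≠ y → F x y = 0 ∨ F x y = 1) (hsym : ∀ x y, F x y = F y x) :
    (fromRel fun x y => F x y = 1).adjMatrix R + k • 1 = of F := by
  ext x y
  by_cases hxy : x = y
  · subst hxy; simp [hdiag]
  · rcases hoff x y hxy with h | h <;> simp [hxy, h, hsym y x]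

variable [Fintype V]

theorem adjMatrix_mul_self_apply {R : Type*} [NonAssocSemiring R] (v w : V) :
    (G.adjMatrix R * G.adjMatrix R) v w = #{u ∈ G.neighborFinset v | G.Adj u w} := by
  rw [adjMatrix_mul_apply]
  simp [adjMatrix_apply, Finset.sum_boole]

variable [DecidableEq V]

theorem isSRGWith_of_adj_trans {d : ℕ} (hreg : G.IsRegularOfDegree d)
    (htrans : ∀ {u v w}, G.Adj u v → G.Adj v w → u ≠ w → G.Adj u w) :
    G.IsSRGWith (Fintype.card V) d (d - 1) 0 where
  card := rfl
  regular := hreg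
  of_adj v w hvw := by
    have hcommon : G.commonNeighbors v w = G.neighborSet v \ {w} := by
      ext u
      simp only [mem_commonNeighbors, mem_neighborSet, Set.mem_sdiff, Set.mem_singleton_iff]
      exact ⟨fun h => ⟨h.1, h.2.ne'⟩, fun h => ⟨h.1, htrans h.1.symm hvw h.2 |>.symm⟩⟩
    simp_rw [hcommon, ← Set.toFinset_card, Set.toFinset_sdiff, ← neighborFinset_def]
    simp [Finset.card_sdiff, hvw, hreg v]
  of_not_adj v w hne hvw := by
    simp only [Fintype.card_eq_zero_iff, isEmpty_subtype, mem_commonNeighbors, not_and]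
    exact fun u hvu huw => hvw (htrans hvu huw.symm hne)

variable {R : Type*} [Field R]

theorem adjMatrix_add_smul_one_mul (a b : R) :
    (G.adjMatrix R + a • 1) * (G.adjMatrix R + b • 1) =
      G.adjMatrix R * G.adjMatrix R + (a + b) • G.adjMatrix R + (a * b) • 1 := by
  simp only [add_mul, mul_add, Matrix.mul_smul, Matrix.smul_mul, mul_one, one_mul, smul_smul,
    add_smul]
  module

theorem exists_isSRGWith_of_mul_eq_zero [CharZero R] [Nonempty V] {a b : R}
    (h : (G.adjMatrix R + a • 1) * (G.adjMatrix R + b • 1) = 0) :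
    ∃ d, G.IsSRGWith (Fintype.card V) d (d - 1) 0 := by
  have hentry (v w : V) := congrFun (congrFun (G.adjMatrix_add_smul_one_mul a b ▸ h) v) w
  simp only [Matrix.add_apply, Matrix.smul_apply, smul_eq_mul, Matrix.zero_apply] at hentry
  have hdeg (v : V) : (G.degree v : R) = -(a * b) := by
    have := hentry v v
    rw [adjMatrix_mul_self_apply_self, adjMatrix_apply, if_neg (G.irrefl), one_apply_eq] at this
    linear_combination this
  refine ⟨G.degree (Classical.arbitrary V), G.isSRGWith_of_adj_trans (fun v => ?_) ?_⟩
  · exact_mod_cast (hdeg v).trans (hdeg _).symm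
  · intro u v w huv hvw huw
    by_contra huw'
    have hcommon := hentry u w
    rw [adjMatrix_mul_self_apply, adjMatrix_apply, if_neg huw', one_apply_ne huw] at hcommon
    have hempty : #{x ∈ G.neighborFinset u | G.Adj x w} = 0 := by simpa using hcommon
    exact Finset.card_ne_zero.mpr ⟨v, by simpa [huv] using hvw⟩ hempty

theorem exists_isSRGWith_of_two_mul_rank_le [CharZero R] [Nonempty V] {k : R}
    (hk : IsIntegral ℚ k) (hkQ : k ∉ (algebraMap ℚ R).range)
    (hrank : 2 * (G.adjMatrix R + k • 1).rank ≤ Fintype.card V) :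
    ∃ d, G.IsSRGWith (Fintype.card V) d (d - 1) 0 := by
  obtain ⟨β₁, hβ₁, β₂, hβ₂, hne⟩ := exists_ne_mem_aroots_minpoly (L := ℂ) hk hkQ
  have hrank_root (β : ℂ) (hβ : β ∈ (minpoly ℚ k).aroots ℂ) :
      (G.adjMatrix ℂ + β • 1).rank = (G.adjMatrix R + k • 1).rank := by
    rw [← G.map_adjMatrix (algebraMap ℚ ℂ), ← G.map_adjMatrix (algebraMap ℚ R)]
    exact rank_map_add_smul_one_eq_of_mem_aroots _ hk hβ
  have hsub : G.adjMatrix ℂ + β₂ • 1 = G.adjMatrix ℂ + β₁ • 1 - (β₁ - β₂) • 1 := by module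
  refine G.exists_isSRGWith_of_mul_eq_zero (a := β₁) (b := β₂) ?_
  rw [hsub]
  refine mul_sub_smul_one_eq_zero_of_rank_add_rank_le (sub_ne_zero.mpr hne) ?_
  rw [← hsub, hrank_root _ hβ₁, hrank_root _ hβ₂]
  omega

variable {G} in
theorem IsSRGWith.eq_neg_one_or_eq_of_mulVec_eq_smul {n d : ℕ}
    (h : G.IsSRGWith n d (d - 1) 0) {μ : R} {x : V → R} (hx : x ≠ 0)
    (hμ : G.adjMatrix R *ᵥ x = μ • x) : μ = -1 ∨ μ = d := by
  have hx2 := congrArg (· *ᵥ x) h.matrix_eq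
  simp only [sq, ← Matrix.mulVec_mulVec, hμ, Matrix.mulVec_smul, Matrix.add_mulVec,
    Matrix.smul_mulVec, Matrix.one_mulVec, zero_smul, add_zero] at hx2
  have hpoly : μ * μ - (d - 1 : ℕ) * μ - d = 0 := by
    rw [← smul_eq_zero_iff_left hx]
    simp only [sub_smul, mul_smul, hx2, Nat.cast_smul_eq_nsmul]
    abel
  rcases d with _ | d
  · exact Or.inr (by simpa using hpoly)
  · have : (μ + 1) * (μ - (d + 1)) = 0 := by push_cast at hpoly; linear_combination hpoly
    rcases mul_eq_zero.mp this with h | h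
    · exact Or.inl (by linear_combination h)
    · exact Or.inr (by push_cast; linear_combination h)

end SimpleGraph

theorem key_lemma_integrality
    (d N : ℕ) (hN : 0 < N)
    (X : Finset (EuclideanSpace ℝ (Fin d)))
    (k : ℝ)
    (F : {x // x ∈ X} → {x // x ∈ X} → ℝ)
    (hdiag : ∀ x, F x x = k)
    (hoff : ∀ x y, x ≠ y → F x y = 0 ∨ F x y = 1)
    (hsym : ∀ x y, F x y = F y x)
    (hrank : (Matrix.of F).rank ≤ N)
    (hcard : 2 * N ≤ X.card) :
    ∃ z : ℤ, k = (z : ℝ) := by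
  classical
  let G := SimpleGraph.fromRel fun x y : {x // x ∈ X} => F x y = 1
  have hM : G.adjMatrix ℝ + k • 1 = Matrix.of F :=
    SimpleGraph.adjMatrix_fromRel_add_smul_one hdiag hoff hsym
  have hcardX : 2 * N ≤ Fintype.card {x // x ∈ X} := by rwa [Fintype.card_coe]
  have hdet : (G.adjMatrix ℝ + k • 1).det = 0 := by
    by_contra h
    have := rank_of_det_ne_zero h
    rw [hM] at this
    omega
  have hint : IsIntegral ℤ k :=
    (G.adjMatrix ℤ).isIntegral_of_det_map_add_smul_one_eq_zero (by rwa [G.map_adjMatrix])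
  by_cases hkQ : k ∈ (algebraMap ℚ ℝ).range
  · exact exists_int_eq_of_isIntegral_of_mem_range hint hkQ
  have : Nonempty {x // x ∈ X} := Fintype.card_pos_iff.mp (by omega)
  obtain ⟨r, hr⟩ := G.exists_isSRGWith_of_two_mul_rank_le hint.tower_top hkQ (by rw [hM]; omega)
  obtain ⟨v, hv0, hv⟩ := exists_mulVec_eq_zero_iff.mpr hdet
  rw [add_mulVec, smul_mulVec, one_mulVec, add_eq_zero_iff_eq_neg, ← neg_smul] at hv
  rcases hr.eq_neg_one_or_eq_of_mulVec_eq_smul hv0 hv with h | h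
  · exact ⟨1, by push_cast; linarith⟩
  · exact ⟨-r, by push_cast; linarith⟩
end

section
/- Let F : D → ℝ^{s-1} be the map (t₁,…,t_{s-1}) ↦ (K₁,…,K_{s-1}), where K_i = ∏_{j=1,…,s, j≠i} t_j/(t_j - t_i) and t_s = 1. Then the determinant of the Jacobian matrix of F equals (s-1)! · ∏_{i=1}^{s-1} K_i/(t_s - t_i), which is nonzero on D = {0 < t₁ < ⋯ < t_{s-1} < 1}. Consequently F is locally injective on D. -/
/-!
Put `s = 1 - t`. The logarithmic derivative of each factor `t j / (t j - t i)` gives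
`∂K_i/∂t_q = K_i t_i / (t_q (1 - t_q)) · N_iq`, where `N_iq = s_q / (s_q - s_i)` for `q ≠ i` and
`N_ii = 1 + ∑_{k ≠ i} s_i / (s_i - s_k)`. Applied to the column `(s_j ^ m)_j`, the matrix `N`
returns `(n - m) s_i ^ m` plus lower powers of `s_i` with power sums of `s` as coefficients, so
`N V = V T` for the Vandermonde matrix `V` of the distinct nodes `s` and an upper triangular `T`
with diagonal `n, n - 1, …, 1`. Hence `det N = n!`, the Jacobian determinant is
`n! ∏ K_i / (1 - t_i) ≠ 0`, and the inverse function theorem gives local injectivity.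
-/

open Finset

section LogDeriv

variable {𝕜 E ι : Type*} [NontriviallyNormedField 𝕜] [NormedAddCommGroup E]
  [NormedSpace 𝕜 E] {x : E}

theorem HasStrictFDerivAt.finsetProd_of_smul {s : Finset ι} {g : ι → E → 𝕜}
    {L : ι → E →L[𝕜] 𝕜}
    (hg : ∀ k ∈ s, HasStrictFDerivAt (g k) (g k x • L k) x) :
    HasStrictFDerivAt (∏ k ∈ s, g k ·) ((∏ k ∈ s, g k x) • ∑ k ∈ s, L k) x := by
  classical
  refine (HasStrictFDerivAt.finsetProd hg).congr_fderiv ?_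
  rw [smul_sum]
  refine sum_congr rfl fun k hk => ?_
  rw [smul_smul, prod_erase_mul _ _ hk]

theorem HasStrictFDerivAt.div_self_sub {a b : E → 𝕜} {a' b' : E →L[𝕜] 𝕜}
    (ha : HasStrictFDerivAt a a' x) (hb : HasStrictFDerivAt b b' x) (ha0 : a x ≠ 0)
    (hab : a x ≠ b x) :
    HasStrictFDerivAt (fun y => a y / (a y - b y))
      ((a x / (a x - b x)) • (a x * (a x - b x))⁻¹ • (a x • b' - b x • a')) x := by
  have hsub : a x - b x ≠ 0 := sub_ne_zero.2 hab
  simp_rw [div_eq_mul_inv]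
  have hinv := (hasStrictDerivAt_inv hsub).comp_hasStrictFDerivAt x (ha.sub hb)
  refine (ha.mul hinv).congr_fderiv ?_
  ext v
  simp only [add_apply, smul_apply, sub_apply, smul_eq_mul, Function.comp_apply, Pi.sub_apply]
  field_simp
  ring

end LogDeriv

theorem HasStrictFDerivAt.exists_mem_nhds_injOn {𝕜 E : Type*} [NontriviallyNormedField 𝕜]
    [CompleteSpace 𝕜] [NormedAddCommGroup E] [NormedSpace 𝕜 E] [FiniteDimensional 𝕜 E]
    {f : E → E} {f' : E →L[𝕜] E} {x : E} (hf : HasStrictFDerivAt f f' x)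
    (hdet : f'.det ≠ 0) :
    ∃ U ∈ nhds x, Set.InjOn f U := by
  have := FiniteDimensional.complete 𝕜 E
  rw [← f'.coe_toContinuousLinearEquivOfDetNeZero hdet] at hf
  have hinj := (hf.toOpenPartialHomeomorph f).injOn
  rw [hf.toOpenPartialHomeomorph_coe] at hinj
  exact ⟨_, (hf.toOpenPartialHomeomorph f).open_source.mem_nhds
    hf.mem_toOpenPartialHomeomorph_source, hinj⟩

theorem exists_mem_nhds_injOn_of_det_ne_zero {𝕜 : Type*} [NontriviallyNormedField 𝕜]
    [CompleteSpace 𝕜] {n : ℕ} {f : (Fin n → 𝕜) → Fin n → 𝕜} {x : Fin n → 𝕜}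
    (hf : ∀ i, HasStrictFDerivAt (f · i) (fderiv 𝕜 (f · i) x) x)
    (hdet : (Matrix.of fun i j => fderiv 𝕜 (f · i) x (Pi.single j 1)).det ≠ 0) :
    ∃ U ∈ nhds x, Set.InjOn f U := by
  refine (hasStrictFDerivAt_pi.2 hf).exists_mem_nhds_injOn ?_
  rw [ContinuousLinearMap.det, ← LinearMap.det_toMatrix']
  convert hdet using 2
  ext i j
  simp [LinearMap.toMatrix'_apply]

section NodeMatrix

variable {𝕜 : Type*} [Field 𝕜] {n : ℕ}

def nodeMatrix (s : Fin n → 𝕜) : Matrix (Fin n) (Fin n) 𝕜 :=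
  Matrix.of fun i j =>
    if i = j then 1 + ∑ k ∈ univ.erase i, s i / (s i - s k) else s j / (s j - s i)

def powerSumMatrix (s : Fin n → 𝕜) : Matrix (Fin n) (Fin n) 𝕜 :=
  Matrix.of (fun r m : Fin n => if r ≤ m then ∑ k, s k ^ ((m : ℕ) - r) else 0) -
    Matrix.diagonal fun m : Fin n => ((m : ℕ) : 𝕜)

theorem pow_succ_div_sub_add_pow_succ_div_sub {x y : 𝕜} (h : x ≠ y) (m : ℕ) :
    x ^ (m + 1) / (x - y) + y ^ (m + 1) / (y - x) =
      ∑ a ∈ range (m + 1), x ^ a * y ^ (m - a) := by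
  have hgeom := (Commute.all x y).geom_sum₂ h (m + 1)
  rw [Nat.add_sub_cancel] at hgeom
  rw [hgeom, ← neg_sub x y, div_neg, sub_div]
  ring

theorem sum_nodeMatrix_mul_pow {s : Fin n → 𝕜} (hs : Function.Injective s) (i : Fin n)
    (m : ℕ) :
    ∑ j, nodeMatrix s i j * s j ^ m =
      ∑ a ∈ range (m + 1), (∑ k, s k ^ a) * s i ^ (m - a) - m * s i ^ m := by
  have hrest : ∑ j ∈ univ.erase i, nodeMatrix s i j * s j ^ m =
      ∑ j ∈ univ.erase i, s j ^ (m + 1) / (s j - s i) := by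
    refine sum_congr rfl fun j hj => ?_
    rw [nodeMatrix, Matrix.of_apply, if_neg (ne_of_mem_erase hj).symm]
    ring
  have hdiag : nodeMatrix s i i * s i ^ m =
      s i ^ m + ∑ j ∈ univ.erase i, s i ^ (m + 1) / (s i - s j) := by
    rw [nodeMatrix, Matrix.of_apply, if_pos rfl, add_mul, one_mul, sum_mul]
    congr 1
    refine sum_congr rfl fun j _ => ?_
    ring
  have hpow : ∀ a ∈ range (m + 1), s i ^ a * s i ^ (m - a) = s i ^ m := fun a ha => by
    rw [← pow_add, Nat.add_sub_cancel' (mem_range_succ_iff.1 ha)]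
  have hswap : ∑ a ∈ range (m + 1), (∑ k, s k ^ a) * s i ^ (m - a) =
      ∑ k, ∑ a ∈ range (m + 1), s k ^ a * s i ^ (m - a) := by
    simp_rw [sum_mul]
    exact sum_comm
  calc ∑ j, nodeMatrix s i j * s j ^ m
      = s i ^ m + ∑ j ∈ univ.erase i, ∑ a ∈ range (m + 1), s j ^ a * s i ^ (m - a) := by
        rw [← add_sum_erase _ _ (mem_univ i), hrest, hdiag, add_assoc, ← sum_add_distrib]
        congr 1
        refine sum_congr rfl fun j hj => ?_
        rw [add_comm]
        exact pow_succ_div_sub_add_pow_succ_div_sub (hs.ne (ne_of_mem_erase hj)) m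
    _ = _ := by
        rw [hswap, ← add_sum_erase _ _ (mem_univ i), sum_congr rfl hpow, sum_const, card_range,
          nsmul_eq_mul]
        push_cast
        ring

theorem sum_pow_mul_powerSumMatrix (s : Fin n → 𝕜) (i m : Fin n) :
    ∑ r : Fin n, s i ^ (r : ℕ) * powerSumMatrix s r m =
      ∑ a ∈ range (m + 1), (∑ k, s k ^ a) * s i ^ ((m : ℕ) - a) - m * s i ^ (m : ℕ) := by
  have hfilter : (range n).filter (· ≤ (m : ℕ)) = range (m + 1) := by
    ext r; simp only [mem_filter, mem_range]; omega
  simp only [powerSumMatrix, Matrix.sub_apply, Matrix.of_apply, Matrix.diagonal_apply, mul_sub,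
    sum_sub_distrib, mul_ite, mul_zero, sum_ite_eq', mem_univ, if_true]
  rw [mul_comm (s i ^ _)]
  congr 1
  simp_rw [Fin.le_def]
  rw [Fin.sum_univ_eq_sum_range
      (fun r => if r ≤ (m : ℕ) then s i ^ r * ∑ k, s k ^ ((m : ℕ) - r) else 0) n,
    ← sum_filter, hfilter, ← sum_range_reflect]
  refine sum_congr rfl fun a ha => ?_
  have ha : a ≤ m := mem_range_succ_iff.1 ha
  rw [Nat.add_sub_cancel, Nat.sub_sub_self ha, mul_comm]

theorem nodeMatrix_mul_vandermonde {s : Fin n → 𝕜} (hs : Function.Injective s) :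
    nodeMatrix s * Matrix.vandermonde s = Matrix.vandermonde s * powerSumMatrix s := by
  ext i m
  simp only [Matrix.mul_apply, Matrix.vandermonde_apply]
  rw [sum_nodeMatrix_mul_pow hs, sum_pow_mul_powerSumMatrix]

theorem det_powerSumMatrix (s : Fin n → 𝕜) : (powerSumMatrix s).det = n.factorial := by
  have hupper : (powerSumMatrix s).IsUpperTriangular := by
    refine .sub (fun r m (hmr : m < r) => ?_) (Matrix.blockTriangular_diagonal _)
    simp [Matrix.of_apply, not_le.2 hmr]
  rw [Matrix.det_of_isUpperTriangular hupper, ← Nat.descFactorial_self,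
    Nat.descFactorial_eq_prod_range, Nat.cast_prod, ← Fin.prod_univ_eq_prod_range]
  refine prod_congr rfl fun r _ => ?_
  simp [powerSumMatrix, Nat.cast_sub r.isLt.le]

theorem det_nodeMatrix {s : Fin n → 𝕜} (hs : Function.Injective s) :
    (nodeMatrix s).det = n.factorial := by
  have hV : (Matrix.vandermonde s).det ≠ 0 := Matrix.det_vandermonde_ne_zero_iff.2 hs
  apply mul_right_cancel₀ hV
  rw [← Matrix.det_mul, nodeMatrix_mul_vandermonde hs, Matrix.det_mul, det_powerSumMatrix,
    mul_comm]

end NodeMatrix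

-- The value at `0` of the Lagrange basis polynomial of the node `t i` for the nodes `t` and `1`.
def lagrangeWeight {𝕜 : Type*} [Field 𝕜] {n : ℕ} (t : Fin n → 𝕜) (i : Fin n) : 𝕜 :=
  (1 / (1 - t i)) * ∏ j ∈ univ.erase i, t j / (t j - t i)

theorem lagrangeWeight_ne_zero {𝕜 : Type*} [Field 𝕜] {n : ℕ} {t : Fin n → 𝕜}
    (ht0 : ∀ j, t j ≠ 0) (ht1 : ∀ j, t j ≠ 1) (ht : Function.Injective t) (i : Fin n) :
    lagrangeWeight t i ≠ 0 :=
  mul_ne_zero (one_div_ne_zero (sub_ne_zero.2 (ht1 i).symm)) <| prod_ne_zero_iff.2 fun j hj =>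
    div_ne_zero (ht0 j) (sub_ne_zero.2 (ht.ne (ne_of_mem_erase hj)))

section LagrangeWeight

variable {𝕜 : Type*} [NontriviallyNormedField 𝕜] {n : ℕ} {t : Fin n → 𝕜}

open ContinuousLinearMap in
theorem hasStrictFDerivAt_lagrangeWeight (ht0 : ∀ j, t j ≠ 0) (ht1 : ∀ j, t j ≠ 1)
    (ht : Function.Injective t) (i : Fin n) :
    HasStrictFDerivAt (lagrangeWeight · i)
      (lagrangeWeight t i • ((1 - t i)⁻¹ • (proj i : (Fin n → 𝕜) →L[𝕜] 𝕜) +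
        ∑ j ∈ univ.erase i, (t j * (t j - t i))⁻¹ •
          (t j • proj i - t i • proj j : (Fin n → 𝕜) →L[𝕜] 𝕜))) t := by
  have hproj (j : Fin n) :
      HasStrictFDerivAt (fun u : Fin n → 𝕜 => u j) (proj (R := 𝕜) j) t :=
    hasStrictFDerivAt_apply j t
  have hlast :=
    (hasStrictFDerivAt_const (1 : 𝕜) t).div_self_sub (hproj i) one_ne_zero (ht1 i).symm
  have hprod := HasStrictFDerivAt.finsetProd_of_smul (s := univ.erase i) fun j hj =>
    (hproj j).div_self_sub (hproj i) (ht0 j) (ht.ne (ne_of_mem_erase hj))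
  refine (hlast.mul hprod).congr_fderiv ?_
  simp only [lagrangeWeight]
  module

theorem fderiv_lagrangeWeight_single (ht0 : ∀ j, t j ≠ 0) (ht1 : ∀ j, t j ≠ 1)
    (ht : Function.Injective t) (i q : Fin n) :
    fderiv 𝕜 (lagrangeWeight · i) t (Pi.single q 1) =
      lagrangeWeight t i * t i * ((t q * (1 - t q))⁻¹ * nodeMatrix (1 - t) i q) := by
  rw [(hasStrictFDerivAt_lagrangeWeight ht0 ht1 ht i).hasFDerivAt.fderiv]
  simp only [smul_apply, add_apply, _root_.sum_apply, sub_apply, ContinuousLinearMap.proj_apply,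
    smul_eq_mul, nodeMatrix, Matrix.of_apply, Pi.sub_apply, Pi.one_apply]
  have hsub {j} (hj : j ∈ univ.erase i) : t j - t i ≠ 0 :=
    sub_ne_zero.2 (ht.ne (ne_of_mem_erase hj))
  have h1 : 1 - t q ≠ 0 := sub_ne_zero.2 (ht1 q).symm
  by_cases hqi : q = i
  · subst hqi
    have hsum : ∑ j ∈ univ.erase q, (t j * (t j - t q))⁻¹ *
        (t j * (Pi.single q 1 : Fin n → 𝕜) q - t q * (Pi.single q 1 : Fin n → 𝕜) j)
        = ∑ j ∈ univ.erase q, (t j - t q)⁻¹ := sum_congr rfl fun j hj => by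
      rw [Pi.single_eq_same, Pi.single_eq_of_ne (ne_of_mem_erase hj), mul_one, mul_zero,
        sub_zero]
      field_simp [ht0 j, hsub hj]
    have hnode : ∑ j ∈ univ.erase q, (1 - t q) / (1 - t q - (1 - t j))
        = (1 - t q) * ∑ j ∈ univ.erase q, (t j - t q)⁻¹ := by
      rw [mul_sum]
      exact sum_congr rfl fun j _ => by ring
    rw [hsum, if_pos rfl, hnode, Pi.single_eq_same]
    field_simp [ht0 q, h1]
  · have hq : q ∈ univ.erase i := mem_erase.2 ⟨hqi, mem_univ q⟩
    rw [Pi.single_eq_of_ne (Ne.symm hqi), sum_eq_single_of_mem q hq fun j _ hjq => by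
      rw [Pi.single_eq_of_ne hjq]; ring]
    rw [if_neg (Ne.symm hqi), Pi.single_eq_same, show 1 - t q - (1 - t i) = t i - t q by ring]
    have hiq : t i - t q ≠ 0 := sub_ne_zero.2 (ht.ne (Ne.symm hqi))
    field_simp [ht0 q, h1, hsub hq, hiq]
    ring

theorem det_fderiv_lagrangeWeight (ht0 : ∀ j, t j ≠ 0) (ht1 : ∀ j, t j ≠ 1)
    (ht : Function.Injective t) :
    (Matrix.of fun i j => fderiv 𝕜 (lagrangeWeight · i) t (Pi.single j 1)).det =
      n.factorial * ∏ i, lagrangeWeight t i / (1 - t i) := by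
  have hjac : (Matrix.of fun i j => fderiv 𝕜 (lagrangeWeight · i) t (Pi.single j 1)) =
      Matrix.diagonal (fun i => lagrangeWeight t i * t i) * nodeMatrix (1 - t) *
        Matrix.diagonal fun j => (t j * (1 - t j))⁻¹ := by
    ext i j
    rw [Matrix.of_apply, fderiv_lagrangeWeight_single ht0 ht1 ht, Matrix.mul_diagonal,
      Matrix.diagonal_mul]
    ring
  rw [hjac, Matrix.det_mul, Matrix.det_mul, Matrix.det_diagonal, Matrix.det_diagonal,
    det_nodeMatrix (s := 1 - t) (sub_right_injective.comp ht), mul_comm (∏ i, _), mul_assoc,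
    ← prod_mul_distrib]
  congr 1
  refine prod_congr rfl fun i _ => ?_
  field_simp [ht0 i, sub_ne_zero.2 (ht1 i).symm]

end LagrangeWeight

theorem jacobian_det_and_local_injectivity
    (n : ℕ)
    (K : Fin n → (Fin n → ℝ) → ℝ)
    (hK : ∀ i t, K i t =
      (1 / (1 - t i)) * ∏ j ∈ univ.erase i, t j / (t j - t i))
    (F : (Fin n → ℝ) → (Fin n → ℝ))
    (hF : ∀ t i, F t i = K i t)
    (t : Fin n → ℝ)
    (hpos : ∀ j, 0 < t j) (hlt1 : ∀ j, t j < 1)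
    (hmono : ∀ j k : Fin n, j < k → t j < t k) :
    Matrix.det (Matrix.of fun i j => fderiv ℝ (K i) t (Pi.single j 1)) =
      (n.factorial : ℝ) * ∏ i, K i t / (1 - t i) ∧
    Matrix.det (Matrix.of fun i j => fderiv ℝ (K i) t (Pi.single j 1)) ≠ 0 ∧
    ∃ U ∈ nhds t, Set.InjOn F U := by
  obtain rfl : K = fun i u => lagrangeWeight u i := funext₂ hK
  obtain rfl : F = fun u i => lagrangeWeight u i := funext₂ hF
  have ht0 (j : Fin n) : t j ≠ 0 := (hpos j).ne'
  have ht1 (j : Fin n) : t j ≠ 1 := (hlt1 j).ne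
  have ht : Function.Injective t := StrictMono.injective hmono
  have hdet := det_fderiv_lagrangeWeight ht0 ht1 ht
  have hne : (n.factorial : ℝ) * ∏ i, lagrangeWeight t i / (1 - t i) ≠ 0 :=
    mul_ne_zero (Nat.cast_ne_zero.2 n.factorial_ne_zero) <| prod_ne_zero_iff.2 fun i _ =>
      div_ne_zero (lagrangeWeight_ne_zero ht0 ht1 ht i) (sub_ne_zero.2 (ht1 i).symm)
  refine ⟨hdet, hdet ▸ hne, exists_mem_nhds_injOn_of_det_ne_zero (fun i => ?_) (hdet ▸ hne)⟩
  have hKi := hasStrictFDerivAt_lagrangeWeight ht0 ht1 ht i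
  rwa [hKi.hasFDerivAt.fderiv]
end

section
/- Let M' be the (s-1)×(s-1) matrix with entries M'(i,i) = Σ_{k=1,…,s, k≠i} 1/(t_k - t_i) and M'(i,j) = 1/(t_i - t_j) for i ≠ j, where t₁,…,t_s are distinct reals. Then det(M') = (s-1)! · ∏_{j=1}^{s-1} 1/(t_s - t_j). -/
/-! The matrix is, up to sign, the transpose of the principal minor `D̂` (last node removed) of
the Lagrange differentiation matrix `D` of the nodes `t`, conjugated by the diagonal matrix of
barycentric weights. Since `D` maps the values of a polynomial `f` of degree `≤ n` at the nodes
to the values of `f'`, applying it to `(X - tₙ)^(k+1)`, which vanishes at `tₙ`, gives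
`D̂ · diag(tⱼ - tₙ) · V = V · diag(1, …, n)` for the Vandermonde matrix `V` of the `tⱼ - tₙ`.
Hence `det D̂ = n! / ∏ⱼ (tⱼ - tₙ)`. -/

open Finset Polynomial Matrix

namespace Lagrange

variable {F ι : Type*} [Field F] [Fintype ι] [DecidableEq ι]

noncomputable def diffMatrix (v : ι → F) : Matrix ι ι F :=
  of fun i j => (derivative (Lagrange.basis univ v j)).eval (v i)

variable {v : ι → F}

theorem diffMatrix_mulVec_eval (hv : Function.Injective v) {f : F[X]}
    (hf : f.degree < Fintype.card ι) :
    diffMatrix v *ᵥ (fun j => f.eval (v j)) = fun i => (derivative f).eval (v i) := by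
  ext i
  conv_rhs => rw [eq_interpolate (f := f) (s := univ) hv.injOn (by simpa using hf),
    interpolate_apply]
  simp [mulVec, dotProduct, diffMatrix, eval_finsetSum, mul_comm]

theorem diffMatrix_apply_self (hv : Function.Injective v) (i : ι) :
    diffMatrix v i i = ∑ k ∈ univ.erase i, (v i - v k)⁻¹ := by
  rw [diffMatrix, of_apply, basis_eq_prod_sub_inv_mul_nodal_div (mem_univ i),
    ← nodal_erase_eq_nodal_div (mem_univ i), derivative_C_mul, derivative_nodal, eval_mul,
    eval_C, eval_finsetSum, mul_sum]
  refine sum_congr rfl fun k hk => ?_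
  have hne : ∏ l ∈ (univ.erase i).erase k, (v i - v l) ≠ 0 :=
    prod_ne_zero_iff.mpr fun l hl => sub_ne_zero.mpr fun h =>
      (mem_erase.mp (mem_of_mem_erase hl)).1 (hv h).symm
  rw [eval_nodal, nodalWeight, ← mul_prod_erase _ _ hk, prod_inv_distrib]
  field_simp

theorem diffMatrix_apply_of_ne (hv : Function.Injective v) {i j : ι} (hij : i ≠ j) :
    diffMatrix v i j = nodalWeight univ v j / (nodalWeight univ v i * (v i - v j)) := by
  have hsub : v i - v j ≠ 0 := sub_ne_zero.mpr (hv.ne hij)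
  have hi : i ∈ univ.erase j := mem_erase.mpr ⟨hij, mem_univ i⟩
  have hj : j ∈ univ.erase i := mem_erase.mpr ⟨hij.symm, mem_univ j⟩
  have hne := nodalWeight_ne_zero (s := univ) hv.injOn (mem_univ i)
  rw [nodalWeight_eq_eval_nodal_erase_inv, nodal_eq_mul_nodal_erase hj, eval_mul] at hne
  rw [diffMatrix, of_apply, basis_eq_prod_sub_inv_mul_nodal_div (mem_univ j),
    ← nodal_erase_eq_nodal_div (mem_univ j), derivative_C_mul, eval_mul, eval_C,
    eval_nodal_derivative_eval_node_eq hi, nodalWeight_eq_eval_nodal_erase_inv (i := i),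
    nodal_eq_mul_nodal_erase hj, erase_right_comm, eval_mul]
  simp only [eval_sub, eval_X, eval_C]
  field_simp

theorem nodalWeight_inv_mul_diffMatrix_mul_nodalWeight (hv : Function.Injective v) (i j : ι) :
    (nodalWeight univ v i)⁻¹ * diffMatrix v j i * nodalWeight univ v j =
      -(if i = j then ∑ k ∈ univ.erase i, 1 / (v k - v i) else 1 / (v i - v j)) := by
  have hw (i : ι) := nodalWeight_ne_zero (s := univ) hv.injOn (mem_univ i)
  split_ifs with hij
  · subst hij
    rw [diffMatrix_apply_self hv, mul_right_comm, inv_mul_cancel₀ (hw i), one_mul,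
      ← sum_neg_distrib]
    exact sum_congr rfl fun k _ => by rw [one_div, ← inv_neg, neg_sub]
  · rw [diffMatrix_apply_of_ne hv (Ne.symm hij), ← neg_sub (v j) (v i)]
    field_simp [hw i, hw j, sub_ne_zero.mpr (hv.ne (Ne.symm hij))]

variable {n : ℕ} {v : Fin (n + 1) → F}

theorem sum_diffMatrix_castSucc_mul_pow (hv : Function.Injective v) (i : Fin n) {k : ℕ}
    (hk : k < n) :
    ∑ j : Fin n, diffMatrix v i.castSucc j.castSucc * (v j.castSucc - v (Fin.last n)) ^ (k + 1) =
      (k + 1) * (v i.castSucc - v (Fin.last n)) ^ k := by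
  have hdeg : ((X - C (v (Fin.last n))) ^ (k + 1)).degree < ↑(Fintype.card (Fin (n + 1))) := by
    rw [degree_pow, degree_X_sub_C, Fintype.card_fin, nsmul_one]
    exact_mod_cast Nat.succ_lt_succ hk
  simpa [mulVec, dotProduct, Fin.sum_univ_castSucc, derivative_X_sub_C_pow] using
    congrFun (diffMatrix_mulVec_eval hv hdeg) i.castSucc

theorem det_diffMatrix_submatrix_castSucc (hv : Function.Injective v) :
    ((diffMatrix v).submatrix Fin.castSucc Fin.castSucc).det =
      n.factorial / ∏ j : Fin n, (v j.castSucc - v (Fin.last n)) := by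
  set x : Fin n → F := fun j => v j.castSucc - v (Fin.last n)
  have hx : Function.Injective x := fun i j h =>
    Fin.castSucc_injective n (hv (sub_left_injective h))
  have hmul : (diffMatrix v).submatrix Fin.castSucc Fin.castSucc * (diagonal x * vandermonde x) =
      vandermonde x * diagonal (fun k : Fin n => ((k : ℕ) + 1 : F)) := by
    ext i k
    rw [mul_diagonal, mul_apply]
    simpa [diagonal_mul, vandermonde_apply, x, pow_succ', mul_assoc, mul_comm] using
      sum_diffMatrix_castSucc_mul_pow hv i k.isLt
  have hfactorial : ∏ k : Fin n, ((k : ℕ) + 1 : F) = n.factorial := by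
    rw [Fin.prod_univ_eq_prod_range (fun k => (k + 1 : F)), ← prod_range_add_one_eq_factorial]
    push_cast
    rfl
  have hV : (vandermonde x).det ≠ 0 := det_vandermonde_ne_zero_iff.mpr hx
  have hx0 : ∏ j, x j ≠ 0 := prod_ne_zero_iff.mpr fun j _ =>
    sub_ne_zero.mpr (hv.ne (Fin.castSucc_lt_last j).ne)
  have hdet := congrArg det hmul
  rw [det_mul, det_mul, det_mul, det_diagonal, det_diagonal, hfactorial] at hdet
  rw [eq_div_iff hx0]
  exact mul_left_cancel₀ hV (by rw [← hdet]; ring)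

end Lagrange

open Lagrange in
theorem det_M'_formula
    (n : ℕ) (t : Fin (n + 1) → ℝ) (ht : Function.Injective t) :
    Matrix.det (Matrix.of fun i j : Fin n =>
      if i = j then ∑ k ∈ univ.erase i.castSucc, 1 / (t k - t i.castSucc)
      else 1 / (t i.castSucc - t j.castSucc)) =
    (n.factorial : ℝ) * ∏ j : Fin n, 1 / (t (Fin.last n) - t j.castSucc) := by
  set w : Fin n → ℝ := fun i => nodalWeight univ t i.castSucc
  have hA : (Matrix.of fun i j : Fin n =>
      if i = j then ∑ k ∈ univ.erase i.castSucc, 1 / (t k - t i.castSucc)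
      else 1 / (t i.castSucc - t j.castSucc)) =
      -(diagonal w⁻¹ * ((diffMatrix t).submatrix Fin.castSucc Fin.castSucc)ᵀ * diagonal w) := by
    ext i j
    simp [w, diagonal_mul, mul_diagonal, nodalWeight_inv_mul_diffMatrix_mul_nodalWeight ht]
  have hw : ∏ i, w i ≠ 0 := prod_ne_zero_iff.mpr fun i _ =>
    nodalWeight_ne_zero (s := univ) ht.injOn (mem_univ _)
  have hneg (j : Fin n) : t (Fin.last n) - t j.castSucc = -(t j.castSucc - t (Fin.last n)) :=
    (neg_sub _ _).symm
  rw [hA, det_neg, det_mul, det_mul, det_diagonal, det_diagonal, det_transpose,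
    det_diffMatrix_submatrix_castSucc ht, Fintype.card_fin]
  simp_rw [Pi.inv_apply, prod_inv_distrib, one_div, hneg]
  rw [prod_inv_distrib, prod_neg, card_univ, Fintype.card_fin]
  field_simp
  rw [← pow_mul, mul_comm, pow_mul, neg_one_sq, one_pow]
end

section
/- Let M be a real symmetric n×n matrix of the form M = k·I + A where A is symmetric with zero diagonal and entries in {0, 1, -1}. Suppose -k is an eigenvalue of A of multiplicity at least n - N, where n ≥ 2N + 1. If k is an integer, then k² ≤ 2N²/(N+1). -/
/-!
The eigenvalues `λᵢ` of `A` sum to `tr A = 0`, and their squares sum to `tr A² ≤ n(n-1)`.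
If `m` of them equal `μ = -k`, the other `n - m` sum to `-mμ`, so Cauchy–Schwarz gives
`m²μ² ≤ (n - m)(n(n-1) - mμ²)`, i.e. `μ² ≤ (n - m)(n - 1)/m`. For `m ≥ n - N` this is at
most `N(n-1)/(n-N) = N + N(N-1)/(n-N)`, which is at most `2N²/(N+1)` once `n ≥ 2N + 1`.
-/

open Finset Module Module.End

theorem Finset.card_mul_card_mul_sq_le_of_sum_eq_zero {ι : Type*} [Fintype ι] [DecidableEq ι]
    {f : ι → ℝ} (hf : ∑ i, f i = 0) {s : Finset ι} {μ : ℝ} (hs : ∀ i ∈ s, f i = μ) :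
    #s * Fintype.card ι * μ ^ 2 ≤ (Fintype.card ι - #s) * ∑ i, f i ^ 2 := by
  have hsum : ∑ i ∈ s, f i = #s * μ := by rw [sum_congr rfl hs, sum_const, nsmul_eq_mul]
  have hsum_sq : ∑ i ∈ s, f i ^ 2 = #s * μ ^ 2 := by
    rw [sum_congr rfl fun i hi => by rw [hs i hi], sum_const, nsmul_eq_mul]
  have hcompl : ∑ i ∈ sᶜ, f i = -(#s * μ) := by
    linarith [sum_add_sum_compl s f]
  have hcompl_sq : ∑ i ∈ sᶜ, f i ^ 2 = ∑ i, f i ^ 2 - #s * μ ^ 2 := by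
    linarith [sum_add_sum_compl s (f · ^ 2)]
  have hcard : (#sᶜ : ℝ) = Fintype.card ι - #s := by
    rw [card_compl, Nat.cast_sub (card_le_univ s)]
  have hCS := sq_sum_le_card_mul_sum_sq (s := sᶜ) (f := f)
  rw [hcompl, hcompl_sq, hcard] at hCS
  linarith

namespace Matrix

theorem trace_mul_self_le {n : Type*} [Fintype n] [DecidableEq n] (A : Matrix n n ℝ)
    (hdiag : ∀ i, A i i = 0) (hle : ∀ i j, |A i j| ≤ 1) :
    (A * A).trace ≤ Fintype.card n * (Fintype.card n - 1) := by
  have hentry : ∀ i j, A i j * A j i ≤ 1 - if i = j then 1 else 0 := by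
    intro i j
    split_ifs with h
    · simp [h, hdiag]
    · rw [sub_zero]
      calc A i j * A j i ≤ |A i j| * |A j i| := abs_mul (A i j) (A j i) ▸ le_abs_self _
        _ ≤ 1 := mul_le_one₀ (hle i j) (abs_nonneg _) (hle j i)
  calc (A * A).trace = ∑ i, ∑ j, A i j * A j i := by simp [trace, mul_apply]
    _ ≤ ∑ i : n, ∑ j : n, (1 - if i = j then (1 : ℝ) else 0) := by
        gcongr with i _ j _; exact hentry i j
    _ = Fintype.card n * (Fintype.card n - 1) := by simp [sum_sub_distrib, mul_sub]

variable {𝕜 : Type*} [RCLike 𝕜] {n : Type*} [Fintype n] [DecidableEq n] {A : Matrix n n 𝕜}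

theorem map_eigenspace_toEuclideanLin (μ : 𝕜) :
    (eigenspace A.toEuclideanLin μ).map (WithLp.linearEquiv 2 𝕜 (n → 𝕜)).toLinearMap =
      eigenspace A.toLin' μ := by
  ext x
  rw [Submodule.mem_map_equiv, mem_eigenspace_iff, mem_eigenspace_iff]
  simp [WithLp.linearEquiv_symm_apply, ← WithLp.toLp_smul]

namespace IsHermitian

theorem card_filter_eigenvalues_eq (hA : A.IsHermitian) (μ : ℝ) :
    #{i | hA.eigenvalues i = μ} = finrank 𝕜 (eigenspace A.toLin' (μ : 𝕜)) := by
  rw [← map_eigenspace_toEuclideanLin, LinearEquiv.finrank_map_eq,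
    ← (isSymmetric_toEuclideanLin_iff.mpr hA).card_filter_eigenvalues_eq finrank_euclideanSpace]
  exact Finset.card_equiv (Fintype.equivOfCardEq (Fintype.card_fin _)).symm
    (fun i => by rw [mem_filter_univ, mem_filter_univ, RCLike.ofReal_inj]; rfl)

open Unitary in
theorem trace_mul_self_eq_sum_sq_eigenvalues (hA : A.IsHermitian) :
    (A * A).trace = ∑ i, (hA.eigenvalues i : 𝕜) ^ 2 := by
  conv_lhs => rw [hA.spectral_theorem, ← map_mul, conjStarAlgAut_apply, trace_mul_cycle,
    Unitary.coe_star_mul_self, one_mul, diagonal_mul_diagonal, trace_diagonal]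
  simp [sq]

theorem sq_le_of_le_finrank_eigenspace {A : Matrix n n ℝ} (hA : A.IsHermitian)
    (hdiag : ∀ i, A i i = 0) (hle : ∀ i j, |A i j| ≤ 1) {μ : ℝ} {m : ℕ} (hm₀ : 0 < m)
    (hm : m ≤ finrank ℝ (eigenspace A.toLin' μ)) :
    μ ^ 2 ≤ (Fintype.card n - m) * (Fintype.card n - 1) / m := by
  set d := finrank ℝ (eigenspace A.toLin' μ)
  have hcard : #{i | hA.eigenvalues i = μ} = d := hA.card_filter_eigenvalues_eq μ
  have hd : d ≤ Fintype.card n := hcard ▸ card_le_univ _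
  have hm' : (m : ℝ) ≤ d := by exact_mod_cast hm
  have hd' : (d : ℝ) ≤ Fintype.card n := by exact_mod_cast hd
  have hn : (0 : ℝ) < Fintype.card n := by exact_mod_cast (by omega : 0 < Fintype.card n)
  have hsum : ∑ i, hA.eigenvalues i = 0 := by
    simpa [trace, hdiag] using hA.trace_eq_sum_eigenvalues.symm
  have hsum_sq : ∑ i, hA.eigenvalues i ^ 2 ≤ Fintype.card n * (Fintype.card n - 1) := by
    simpa [hA.trace_mul_self_eq_sum_sq_eigenvalues] using A.trace_mul_self_le hdiag hle
  have key := card_mul_card_mul_sq_le_of_sum_eq_zero hsum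
    (s := {i | hA.eigenvalues i = μ}) fun i hi => (mem_filter.mp hi).2
  rw [hcard] at key
  rw [le_div_iff₀' (by positivity)]
  refine le_of_mul_le_mul_left ?_ hn
  calc (Fintype.card n : ℝ) * (m * μ ^ 2) ≤ d * Fintype.card n * μ ^ 2 := by
        rw [mul_left_comm, ← mul_assoc]; gcongr
    _ ≤ (Fintype.card n - d) * ∑ i, hA.eigenvalues i ^ 2 := key
    _ ≤ ((Fintype.card n : ℝ) - m) * (Fintype.card n * (Fintype.card n - 1)) := by
        gcongr; linarith
    _ = Fintype.card n * ((Fintype.card n - m) * (Fintype.card n - 1)) := by ring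

end IsHermitian

end Matrix

theorem mul_sub_one_div_sub_le {n N : ℕ} (hn : 2 * N + 1 ≤ n) :
    (N : ℝ) * (n - 1) / (n - N) ≤ 2 * N ^ 2 / (N + 1) := by
  have hn' : (2 * N + 1 : ℝ) ≤ n := by exact_mod_cast hn
  rw [div_le_div_iff₀ (by linarith) (by positivity)]
  have hN : (0 : ℝ) ≤ N * (N - 1) := by
    rcases N.eq_zero_or_pos with rfl | h
    · simp
    · exact mul_nonneg (by positivity) (sub_nonneg.mpr (Nat.one_le_cast.mpr h))
  nlinarith [mul_nonneg hN (by linarith : (0 : ℝ) ≤ n - 2 * N - 1)]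

theorem integer_k_square_bound
    (n N : ℕ) (k : ℤ) (A : Matrix (Fin n) (Fin n) ℝ)
    (hAsymm : A.IsSymm)
    (hAdiag : ∀ i, A i i = 0)
    (hAentries : ∀ i j, i ≠ j → A i j = 0 ∨ A i j = 1 ∨ A i j = -1)
    (hmult : n - N ≤ Module.finrank ℝ (Module.End.eigenspace (Matrix.toLin' A) (-(k : ℝ))))
    (hn : 2 * N + 1 ≤ n) :
    ((k : ℝ)) ^ 2 ≤ 2 * (N : ℝ) ^ 2 / ((N : ℝ) + 1) := by
  have hA : A.IsHermitian := Matrix.isHermitian_iff_isSymm.mpr hAsymm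
  have hle : ∀ i j, |A i j| ≤ 1 := fun i j => by
    by_cases h : i = j
    · simp [h, hAdiag]
    · rcases hAentries i j h with h | h | h <;> simp [h]
  have hk := hA.sq_le_of_le_finrank_eigenspace hAdiag hle (by omega : 0 < n - N) hmult
  rw [neg_sq, Fintype.card_fin, Nat.cast_sub (by omega), sub_sub_cancel] at hk
  exact hk.trans (mul_sub_one_div_sub_le hn)
end
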